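/- arXiv:2211.02804 — 14 statements merged into one kernel-verified Lean document; each statement's English description precedes it below -/
import Mathlib

section
/- Let A be a distributive lattice with top ⊤ and let · be a join-preserving (in each argument) binary operation satisfying x·y = (x·⊤ ∧ y) ∨ (x ∧ ⊤·y) for all x, y. Define p x = x·⊤ and q x = ⊤·x. Then x ∧ p⊤ ≤ q x and x ∧ q⊤ ≤ p x for all x ∈ A. -/
theorem stmt_2 {A : Type*} [DistribLattice A] [OrderTop A]
    (mul : A → A → A)
    (hl : ∀ x y z : A, mul x (y ⊔ z) = mul x y ⊔ mul x z)
    (hr : ∀ x y z : A, mul (x ⊔ y) z = mul x z ⊔ mul y z)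
    (hud : ∀ x y : A, mul x y = (mul x ⊤ ⊓ y) ⊔ (x ⊓ mul ⊤ y)) :
    (∀ x : A, x ⊓ mul ⊤ ⊤ ≤ mul ⊤ x) ∧
    (∀ x : A, x ⊓ mul ⊤ ⊤ ≤ mul x ⊤) := by
  constructor
  · intro x
    have h := hud ⊤ x
    calc x ⊓ mul ⊤ ⊤ ≤ (mul ⊤ ⊤ ⊓ x) ⊔ (⊤ ⊓ mul ⊤ x) := by
          rw [inf_comm]; exact le_sup_left
      _ = mul ⊤ x := h.symm
  · intro x
    have h := hud x ⊤
    calc x ⊓ mul ⊤ ⊤ ≤ (mul x ⊤ ⊓ ⊤) ⊔ (x ⊓ mul ⊤ ⊤) := le_sup_right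
      _ = mul x ⊤ := h.symm
end

section
/- Let A be a distributive lattice with top ⊤ and p, q join-preserving unary operations satisfying x ∧ p⊤ ≤ q x and x ∧ q⊤ ≤ p x, and define x·y = (p x ∧ y) ∨ (x ∧ q y). Then · is commutative if and only if p = q. -/
theorem stmt_3 {A : Type*} [DistribLattice A] [OrderTop A]
    (p q : A → A)
    (hp : ∀ x y : A, p (x ⊔ y) = p x ⊔ p y)
    (hq : ∀ x y : A, q (x ⊔ y) = q x ⊔ q y)
    (hpq : ∀ x : A, x ⊓ p ⊤ ≤ q x)
    (hqp : ∀ x : A, x ⊓ q ⊤ ≤ p x) :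
    (∀ x y : A, (p x ⊓ y) ⊔ (x ⊓ q y) = (p y ⊓ x) ⊔ (y ⊓ q x)) ↔ p = q := by
  constructor
  · intro h
    funext x
    have h1 := h x ⊤
    simp only [inf_top_eq, top_inf_eq] at h1
    rw [sup_eq_left.2 (hqp x),
        sup_eq_right.2 (le_trans (le_of_eq (inf_comm _ _)) (hpq x))] at h1
    exact h1
  · rintro rfl
    intro x y
    rw [sup_comm, inf_comm (p x) y, inf_comm x (p y)]
end

section
/- Let A be a distributive lattice with top ⊤ and p, q join-preserving unary operations satisfying x ∧ p⊤ ≤ q x and x ∧ q⊤ ≤ p x, and define x·y = (p x ∧ y) ∨ (x ∧ q y). Then · is idempotent (x·x = x for all x) if and only if p⊤ = ⊤ and q⊤ = ⊤, and this in turn holds if and only if p and q are inflationary (x ≤ p x and x ≤ q x for all x). -/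
theorem stmt_5 {A : Type*} [DistribLattice A] [OrderTop A]
    (p q : A → A)
    (hp : ∀ x y : A, p (x ⊔ y) = p x ⊔ p y)
    (hq : ∀ x y : A, q (x ⊔ y) = q x ⊔ q y)
    (hpq : ∀ x : A, x ⊓ p ⊤ ≤ q x)
    (hqp : ∀ x : A, x ⊓ q ⊤ ≤ p x)
    (mul : A → A → A)
    (hmul : ∀ x y : A, mul x y = (p x ⊓ y) ⊔ (x ⊓ q y)) :
    ((∀ x : A, mul x x = x) ↔ (p ⊤ = ⊤ ∧ q ⊤ = ⊤)) ∧
    ((p ⊤ = ⊤ ∧ q ⊤ = ⊤) ↔ (∀ x : A, x ≤ p x ∧ x ≤ q x)) := by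
  have hpq' : p ⊤ ≤ q ⊤ := by simpa using hpq ⊤
  have hqp' : q ⊤ ≤ p ⊤ := by simpa using hqp ⊤
  have heq : p ⊤ = q ⊤ := le_antisymm hpq' hqp'
  have h2 : (p ⊤ = ⊤ ∧ q ⊤ = ⊤) ↔ (∀ x : A, x ≤ p x ∧ x ≤ q x) := by
    constructor
    · rintro ⟨hpt, hqt⟩ x
      constructor
      · have := hqp x; rw [hqt, inf_top_eq] at this; exact this
      · have := hpq x; rw [hpt, inf_top_eq] at this; exact this
    · intro h
      exact ⟨top_le_iff.mp (h ⊤).1, top_le_iff.mp (h ⊤).2⟩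
  refine ⟨?_, h2⟩
  constructor
  · intro h
    have := h ⊤
    rw [hmul, inf_top_eq, top_inf_eq, heq, sup_idem] at this
    exact ⟨heq ▸ this, this⟩
  · intro hh x
    obtain ⟨h1, h2'⟩ := h2.mp hh x
    rw [hmul, inf_eq_right.mpr h1, inf_eq_left.mpr h2', sup_idem]
end

section
/- Let A be a distributive lattice with top ⊤, p and q inflationary join-preserving unary operations, and define x·y = (p x ∧ y) ∨ (x ∧ q y). Then · is associative if and only if both identities p((p x ∧ y) ∨ (x ∧ q y)) = (p x ∧ p y) ∨ (x ∧ q y) and q((p x ∧ y) ∨ (x ∧ q y)) = (p x ∧ y) ∨ (q x ∧ q y) hold for all x, y. -/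
theorem stmt_6 {A : Type*} [DistribLattice A] [OrderTop A]
    (p q : A → A)
    (hp : ∀ x y : A, p (x ⊔ y) = p x ⊔ p y)
    (hq : ∀ x y : A, q (x ⊔ y) = q x ⊔ q y)
    (hpi : ∀ x : A, x ≤ p x)
    (hqi : ∀ x : A, x ≤ q x)
    (mul : A → A → A)
    (hmul : ∀ x y : A, mul x y = (p x ⊓ y) ⊔ (x ⊓ q y)) :
    (∀ x y z : A, mul (mul x y) z = mul x (mul y z)) ↔
    ((∀ x y : A, p ((p x ⊓ y) ⊔ (x ⊓ q y)) = (p x ⊓ p y) ⊔ (x ⊓ q y)) ∧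
     (∀ x y : A, q ((p x ⊓ y) ⊔ (x ⊓ q y)) = (p x ⊓ y) ⊔ (q x ⊓ q y))) := by
  have pmono : ∀ {a b : A}, a ≤ b → p a ≤ p b := by
    intro a b h
    have h1 : p b = p a ⊔ p b := by rw [← hp, sup_eq_right.mpr h]
    exact le_sup_left.trans h1.ge
  have qmono : ∀ {a b : A}, a ≤ b → q a ≤ q b := by
    intro a b h
    have h1 : q b = q a ⊔ q b := by rw [← hq, sup_eq_right.mpr h]
    exact le_sup_left.trans h1.ge
  constructor
  · intro H
    have ptop : p ⊤ = ⊤ := le_antisymm le_top (hpi ⊤)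
    have qtop : q ⊤ = ⊤ := le_antisymm le_top (hqi ⊤)
    have mul_top : ∀ x : A, mul x ⊤ = p x := by
      intro x
      rw [hmul, qtop, inf_top_eq, inf_top_eq, sup_eq_left.mpr (hpi x)]
    have top_mul : ∀ y : A, mul ⊤ y = q y := by
      intro y
      rw [hmul, ptop, top_inf_eq, top_inf_eq, sup_eq_right.mpr (hqi y)]
    have pmul : ∀ x y : A, p (mul x y) = (p x ⊓ p y) ⊔ (x ⊓ q (p y)) := by
      intro x y
      have h := H x y ⊤
      rw [mul_top, mul_top, hmul x (p y)] at h
      exact h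
    have qmul : ∀ y z : A, q (mul y z) = (p (q y) ⊓ z) ⊔ (q y ⊓ q z) := by
      intro y z
      have h := H ⊤ y z
      rw [top_mul, top_mul, hmul (q y) z] at h
      exact h.symm
    have pq : ∀ y : A, p (q y) = q (p y) := by
      intro y
      have h := pmul ⊤ y
      rw [top_mul, ptop, top_inf_eq, top_inf_eq,
        sup_eq_right.mpr (hqi (p y))] at h
      exact h
    have key : ∀ y : A, q (p y) = p y ⊔ q y := by
      intro y
      refine le_antisymm ?_ (sup_le (hqi _) (qmono (hpi y)))
      have h1 : mul (q y) y = q y := by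
        rw [hmul, inf_eq_right.mpr ((hqi y).trans (hpi (q y))), inf_idem,
          sup_eq_right.mpr (hqi y)]
      have h2 := pmul (q y) y
      rw [h1, pq y] at h2
      rw [h2]
      exact sup_le (inf_le_right.trans le_sup_left)
        (inf_le_left.trans le_sup_right)
    constructor
    · intro x y
      rw [← hmul, pmul, key, inf_sup_left, ← sup_assoc,
        sup_eq_left.mpr (inf_le_inf_right (p y) (hpi x))]
    · intro x y
      rw [← hmul, qmul, pq, key, inf_sup_right, sup_assoc,
        sup_eq_right.mpr (inf_le_inf_left (q x) (hqi y))]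
  · rintro ⟨h1, h2⟩ x y z
    simp only [hmul]
    rw [h1, h2]
    rw [inf_sup_right, inf_sup_right, inf_sup_left, inf_sup_left]
    apply le_antisymm
    · refine sup_le (sup_le ?_ ?_) (sup_le ?_ ?_)
      · exact le_sup_of_le_left (le_sup_of_le_left (inf_assoc _ _ _).le)
      · exact le_sup_of_le_right (le_sup_of_le_right
          ((inf_assoc _ _ _).le.trans (inf_le_inf_left _ (inf_le_inf_left _ (hqi z)))))
      · exact le_sup_of_le_left (le_sup_of_le_right (inf_assoc _ _ _).le)
      · exact le_sup_of_le_right (le_sup_of_le_right (inf_assoc _ _ _).le)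
    · refine sup_le (sup_le ?_ ?_) (sup_le ?_ ?_)
      · exact le_sup_of_le_left (le_sup_of_le_left (inf_assoc _ _ _).ge)
      · exact le_sup_of_le_right (le_sup_of_le_left (inf_assoc _ _ _).ge)
      · exact le_sup_of_le_left (le_sup_of_le_left
          ((inf_assoc _ _ _).ge.trans (inf_le_inf_right _ (inf_le_inf_right _ (hpi x)))))
      · exact le_sup_of_le_right (le_sup_of_le_right (inf_assoc _ _ _).ge)
end

section
/- Let A be a distributive lattice with top ⊤ and p, q join-preserving unary operations satisfying x ∧ p⊤ ≤ q x and x ∧ q⊤ ≤ p x, and define x·y = (p x ∧ y) ∨ (x ∧ q y). Then an element 1 ∈ A is a two-sided identity for · (x·1 = x = 1·x for all x) if and only if p 1 = ⊤ = q 1 and (p x ∨ q x) ∧ 1 ≤ x for all x. -/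
theorem stmt_7 {A : Type*} [DistribLattice A] [OrderTop A]
    (p q : A → A)
    (hp : ∀ x y : A, p (x ⊔ y) = p x ⊔ p y)
    (hq : ∀ x y : A, q (x ⊔ y) = q x ⊔ q y)
    (hpq : ∀ x : A, x ⊓ p ⊤ ≤ q x)
    (hqp : ∀ x : A, x ⊓ q ⊤ ≤ p x)
    (mul : A → A → A)
    (hmul : ∀ x y : A, mul x y = (p x ⊓ y) ⊔ (x ⊓ q y))
    (e : A) :
    (∀ x : A, mul x e = x ∧ mul e x = x) ↔
    (p e = ⊤ ∧ q e = ⊤ ∧ ∀ x : A, (p x ⊔ q x) ⊓ e ≤ x) := by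
  constructor
  · intro h
    have hqe : q e = ⊤ := by
      have h1 := (h ⊤).1
      rw [hmul] at h1
      have : p ⊤ ⊓ e ≤ q e := le_trans (by rw [inf_comm]) (hpq e)
      rw [top_inf_eq] at h1
      exact top_le_iff.mp (h1 ▸ sup_le this le_rfl)
    have hpe : p e = ⊤ := by
      have h1 := (h ⊤).2
      rw [hmul] at h1
      have : e ⊓ q ⊤ ≤ p e := hqp e
      rw [inf_top_eq] at h1
      exact top_le_iff.mp (h1 ▸ sup_le le_rfl this)
    refine ⟨hpe, hqe, fun x => ?_⟩
    rw [inf_sup_right]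
    apply sup_le
    · have h1 := (h x).1
      rw [hmul] at h1
      calc p x ⊓ e ≤ (p x ⊓ e) ⊔ (x ⊓ q e) := le_sup_left
        _ = x := h1
    · have h1 := (h x).2
      rw [hmul] at h1
      calc q x ⊓ e ≤ (p e ⊓ x) ⊔ (e ⊓ q x) := le_sup_of_le_right (by rw [inf_comm])
        _ = x := h1
  · rintro ⟨hpe, hqe, h⟩ x
    have h1 : p x ⊓ e ≤ x := le_trans (inf_le_inf_right e le_sup_left) (h x)
    have h2 : e ⊓ q x ≤ x := le_trans (by rw [inf_comm]; exact inf_le_inf_right e le_sup_right) (h x)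
    constructor
    · rw [hmul, hqe, inf_top_eq]
      exact sup_eq_right.mpr h1
    · rw [hmul, hpe, top_inf_eq]
      exact sup_eq_left.mpr h2
end

section
/- Let A be a distributive lattice with top ⊤ and p, q join-preserving unary operations satisfying x ∧ p⊤ ≤ q x and x ∧ q⊤ ≤ p x, and define x·y = (p x ∧ y) ∨ (x ∧ q y). If · has a two-sided identity element, then · is idempotent. -/
theorem stmt_8 {A : Type*} [DistribLattice A] [OrderTop A]
    (p q : A → A)
    (hp : ∀ x y : A, p (x ⊔ y) = p x ⊔ p y)
    (hq : ∀ x y : A, q (x ⊔ y) = q x ⊔ q y)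
    (hpq : ∀ x : A, x ⊓ p ⊤ ≤ q x)
    (hqp : ∀ x : A, x ⊓ q ⊤ ≤ p x)
    (mul : A → A → A)
    (hmul : ∀ x y : A, mul x y = (p x ⊓ y) ⊔ (x ⊓ q y))
    (e : A) (he : ∀ x : A, mul x e = x ∧ mul e x = x) :
    ∀ x : A, mul x x = x := by
  have hpe : p e ≤ p ⊤ := by
    have := hp e ⊤
    simp at this
    exact this
  have hqe : q e ≤ q ⊤ := by
    have := hq e ⊤
    simp at this
    exact this
  intro x
  have h1 : (p x ⊓ e) ⊔ (x ⊓ q e) = x := by rw [← hmul]; exact (he x).1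
  have h2 : (p e ⊓ x) ⊔ (e ⊓ q x) = x := by rw [← hmul]; exact (he x).2
  have hxp : x ≤ p x := by
    calc x = (p x ⊓ e) ⊔ (x ⊓ q e) := h1.symm
    _ ≤ p x ⊔ p x :=
        sup_le_sup inf_le_left ((inf_le_inf_left x hqe).trans (hqp x))
    _ = p x := sup_idem _
  have hxq : x ≤ q x := by
    calc x = (p e ⊓ x) ⊔ (e ⊓ q x) := h2.symm
    _ ≤ q x ⊔ q x := by
        refine sup_le_sup ?_ inf_le_right
        rw [inf_comm]
        exact (inf_le_inf_left x hpe).trans (hpq x)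
    _ = q x := sup_idem _
  rw [hmul, inf_eq_right.2 hxp, inf_eq_left.2 hxq, sup_idem]
end

section
/- Every idempotent Boolean magma is unary-determined: if A is a Boolean algebra with a binary operation · that distributes over join in each argument and satisfies x·x = x for all x, then x·y = (x·⊤ ∧ y) ∨ (x ∧ ⊤·y) for all x, y ∈ A. -/
theorem stmt_9 {A : Type*} [BooleanAlgebra A]
    (mul : A → A → A)
    (hl : ∀ x y z : A, mul x (y ⊔ z) = mul x y ⊔ mul x z)
    (hr : ∀ x y z : A, mul (x ⊔ y) z = mul x z ⊔ mul y z)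
    (hidem : ∀ x : A, mul x x = x) :
    ∀ x y : A, mul x y = (mul x ⊤ ⊓ y) ⊔ (x ⊓ mul ⊤ y) := by
  have monl : ∀ x : A, ∀ {a b : A}, a ≤ b → mul x a ≤ mul x b := by
    intro x a b h
    have : mul x b = mul x a ⊔ mul x b := by
      conv_lhs => rw [← sup_eq_right.mpr h, hl]
    rw [this]; exact le_sup_left
  have monr : ∀ z : A, ∀ {a b : A}, a ≤ b → mul a z ≤ mul b z := by
    intro z a b h
    have : mul b z = mul a z ⊔ mul b z := by
      conv_lhs => rw [← sup_eq_right.mpr h, hr]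
    rw [this]; exact le_sup_left
  have lb : ∀ x y : A, x ⊓ y ≤ mul x y := by
    intro x y
    calc x ⊓ y = mul (x ⊓ y) (x ⊓ y) := (hidem _).symm
    _ ≤ mul x y := le_trans (monl _ inf_le_right) (monr _ inf_le_left)
  have ub : ∀ x y : A, mul x y ≤ x ⊔ y := by
    intro x y
    calc mul x y ≤ mul (x ⊔ y) (x ⊔ y) :=
          le_trans (monl _ le_sup_right) (monr _ le_sup_left)
    _ = x ⊔ y := hidem _
  intro x y
  apply le_antisymm
  · have h2 : mul x y = (mul x y ⊓ x) ⊔ (mul x y ⊓ y) := by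
      rw [← inf_sup_left, inf_eq_left.mpr (ub x y)]
    rw [h2]
    apply sup_le
    · exact le_sup_of_le_right (le_inf inf_le_right
        (le_trans inf_le_left (monr _ le_top)))
    · exact le_sup_of_le_left (le_inf
        (le_trans inf_le_left (monl _ le_top)) inf_le_right)
  · apply sup_le
    · have h : mul x ⊤ = mul x y ⊔ mul x yᶜ := by rw [← hl, sup_compl_eq_top]
      rw [h, inf_sup_right]
      apply sup_le inf_le_left
      calc mul x yᶜ ⊓ y ≤ (x ⊔ yᶜ) ⊓ y := inf_le_inf_right y (ub x yᶜ)
        _ = (x ⊓ y) ⊔ (yᶜ ⊓ y) := by rw [inf_sup_right]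
        _ = x ⊓ y := by rw [compl_inf_eq_bot, sup_bot_eq]
        _ ≤ mul x y := lb x y
    · have h : mul ⊤ y = mul x y ⊔ mul xᶜ y := by rw [← hr, sup_compl_eq_top]
      rw [h, inf_sup_left]
      apply sup_le inf_le_right
      calc x ⊓ mul xᶜ y ≤ x ⊓ (xᶜ ⊔ y) := inf_le_inf_left x (ub xᶜ y)
        _ = (x ⊓ xᶜ) ⊔ (x ⊓ y) := by rw [inf_sup_left]
        _ = x ⊓ y := by rw [inf_compl_eq_bot, bot_sup_eq]
        _ ≤ mul x y := lb x y
end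

section
/- Let A be a Brouwerian algebra (a lattice with top ⊤ in which meet has a residual →), and let p, q be unary operations with residuals p*, q* (p x ≤ y ⟺ x ≤ p* y, and similarly for q) satisfying x ∧ p⊤ ≤ q x and x ∧ q⊤ ≤ p x. Define x·y = (p x ∧ y) ∨ (x ∧ q y). Then · is residuated, with x\z = (p x → z) ∧ q*(x → z) and z/y = p*(y → z) ∧ (q y → z); that is, x·y ≤ z ⟺ y ≤ x\z ⟺ x ≤ z/y. -/
theorem stmt_11 {A : Type*} [Lattice A] [OrderTop A]
    (himp : A → A → A)
    (hres : ∀ x y z : A, x ⊓ y ≤ z ↔ y ≤ himp x z)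
    (p q pstar qstar : A → A)
    (hpadj : ∀ x y : A, p x ≤ y ↔ x ≤ pstar y)
    (hqadj : ∀ x y : A, q x ≤ y ↔ x ≤ qstar y)
    (hpq : ∀ x : A, x ⊓ p ⊤ ≤ q x)
    (hqp : ∀ x : A, x ⊓ q ⊤ ≤ p x)
    (mul : A → A → A)
    (hmul : ∀ x y : A, mul x y = (p x ⊓ y) ⊔ (x ⊓ q y)) :
    ∀ x y z : A,
      (mul x y ≤ z ↔ y ≤ himp (p x) z ⊓ qstar (himp x z)) ∧
      (mul x y ≤ z ↔ x ≤ pstar (himp y z) ⊓ himp (q y) z) := by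
  intro x y z
  have h1 : p x ⊓ y ≤ z ↔ y ≤ himp (p x) z := hres _ _ _
  have h2 : x ⊓ q y ≤ z ↔ y ≤ qstar (himp x z) := (hres _ _ _).trans (hqadj _ _)
  have h3 : p x ⊓ y ≤ z ↔ x ≤ pstar (himp y z) := by
    rw [inf_comm]; exact (hres _ _ _).trans (hpadj _ _)
  have h4 : x ⊓ q y ≤ z ↔ x ≤ himp (q y) z := by
    rw [inf_comm]; exact hres _ _ _
  rw [hmul]
  simp only [sup_le_iff, le_inf_iff, h1, h2, h3, h4]
  tauto
end

section
/- Let A be a distributive lattice with top ⊤ and let p be a join-preserving closure operator on A (x ≤ p x = p p x). Define x·y = (p x ∧ y) ∨ (x ∧ p y). Then · is associative if and only if p x ∧ p y ≤ p((p x ∧ y) ∨ (x ∧ p y)) for all x, y. -/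
theorem stmt_12 {A : Type*} [DistribLattice A] [OrderTop A]
    (p : A → A)
    (hmono : Monotone p)
    (hp : ∀ x y : A, p (x ⊔ y) = p x ⊔ p y)
    (hinfl : ∀ x : A, x ≤ p x)
    (hidem : ∀ x : A, p (p x) = p x)
    (mul : A → A → A)
    (hmul : ∀ x y : A, mul x y = (p x ⊓ y) ⊔ (x ⊓ p y)) :
    (∀ x y z : A, mul (mul x y) z = mul x (mul y z)) ↔
    (∀ x y : A, p x ⊓ p y ≤ p ((p x ⊓ y) ⊔ (x ⊓ p y))) := by
  have ptop : p (⊤ : A) = ⊤ := le_antisymm le_top (hinfl ⊤)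
  have hub : ∀ x y : A, p ((p x ⊓ y) ⊔ (x ⊓ p y)) ≤ p x ⊓ p y := by
    intro x y
    rw [hp]
    apply sup_le
    · exact le_inf (le_trans (hmono inf_le_left) (hidem x).le) (hmono inf_le_right)
    · exact le_inf (hmono inf_le_left) (le_trans (hmono inf_le_right) (hidem y).le)
  constructor
  · intro h x y
    have := h x y ⊤
    rw [hmul (mul x y) ⊤, hmul x (mul y ⊤), hmul y ⊤, hmul x y, ptop] at this
    simp only [inf_top_eq] at this
    rw [sup_eq_left.2 (hinfl y)] at this
    simp only [hidem] at this
    have hxy : x ⊓ p y ≤ p x ⊓ p y := inf_le_inf_right _ (hinfl x)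
    rw [sup_eq_left.2 (hinfl _), sup_eq_left.2 hxy] at this
    exact this.ge
  · intro h x y z
    have pcl : ∀ a b : A, p ((p a ⊓ b) ⊔ (a ⊓ p b)) = p a ⊓ p b :=
      fun a b => le_antisymm (hub a b) (h a b)
    rw [hmul (mul x y) z, hmul x (mul y z), hmul x y, hmul y z, pcl, pcl,
      inf_sup_right, inf_sup_left]
    have e1 : (p x ⊓ y) ⊓ p z = p x ⊓ (y ⊓ p z) := inf_assoc _ _ _
    have e2 : (x ⊓ p y) ⊓ p z = x ⊓ (p y ⊓ p z) := inf_assoc _ _ _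
    have e3 : p x ⊓ p y ⊓ z = p x ⊓ (p y ⊓ z) := inf_assoc _ _ _
    rw [e1, e2, e3, ← sup_assoc, ← inf_sup_left]
end

section
/- Let (W, ≤, R) be a Birkhoff frame and D(W) its downset algebra with Y·Z = {x | ∃y ∈ Y, z ∈ Z, xRyz}. Then · is idempotent on downsets (X·X = X for every downset X) if and only if for all x, y, z ∈ W: xRxx holds, and xRyz implies x ≤ y or x ≤ z. -/
theorem stmt_15 {W : Type*} [PartialOrder W]
    (R : W → W → W → Prop)
    (hR1 : ∀ u x y z : W, u ≤ x → R x y z → R u y z)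
    (hR2 : ∀ x y v z : W, R x y z → y ≤ v → R x v z)
    (hR3 : ∀ x y z w : W, R x y z → z ≤ w → R x y w)
    (mul : Set W → Set W → Set W)
    (hmul : ∀ Y Z : Set W, mul Y Z = {x | ∃ y ∈ Y, ∃ z ∈ Z, R x y z}) :
    (∀ X : Set W, IsLowerSet X → mul X X = X) ↔
    ((∀ x : W, R x x x) ∧ ∀ x y z : W, R x y z → x ≤ y ∨ x ≤ z) := by
  constructor
  · intro h
    constructor
    · intro x
      have hls : IsLowerSet {u : W | u ≤ x} := fun a b hba ha => le_trans hba ha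
      have hx : x ∈ mul {u : W | u ≤ x} {u : W | u ≤ x} := by
        rw [h _ hls]; exact le_refl x
      rw [hmul] at hx
      obtain ⟨y, hy, z, hz, hR⟩ := hx
      exact hR3 _ _ _ _ (hR2 _ _ _ _ hR hy) hz
    · intro x y z hR
      have hls : IsLowerSet {u : W | u ≤ y ∨ u ≤ z} := by
        intro a b hba ha
        rcases ha with h1 | h1
        · exact Or.inl (le_trans hba h1)
        · exact Or.inr (le_trans hba h1)
      have hx : x ∈ mul {u : W | u ≤ y ∨ u ≤ z} {u : W | u ≤ y ∨ u ≤ z} := by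
        rw [hmul]
        exact ⟨y, Or.inl le_rfl, z, Or.inr le_rfl, hR⟩
      rw [h _ hls] at hx
      exact hx
  · rintro ⟨hidem, hsplit⟩ X hX
    rw [hmul]
    ext x
    constructor
    · rintro ⟨y, hy, z, hz, hR⟩
      rcases hsplit _ _ _ hR with h1 | h1
      · exact hX h1 hy
      · exact hX h1 hz
    · intro hx
      exact ⟨x, hx, x, hx, hidem x⟩
end

section
/- Let (W, ≤, P) be a P-frame (P a weakening relation: u ≤ x, xPy, y ≤ v imply uPv) such that P is reflexive and transitive and satisfies (Pforest): xPy and xPz imply x ≤ y or x ≤ z or yPz or zPy. Then the following associativity-forcing frame condition holds: for all x, y, z, if xPy and xPz then there exists w with xPw and ((wPy and w ≤ z) or (w ≤ y and wPz)). -/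
theorem stmt_16 {W : Type*} [PartialOrder W]
    (P : W → W → Prop)
    (hweak : ∀ u x y v : W, u ≤ x → P x y → y ≤ v → P u v)
    (hrefl : ∀ x : W, P x x)
    (htrans : ∀ x y z : W, P x y → P y z → P x z)
    (hforest : ∀ x y z : W, P x y → P x z → x ≤ y ∨ x ≤ z ∨ P y z ∨ P z y) :
    ∀ x y z : W, P x y → P x z →
      ∃ w : W, P x w ∧ ((P w y ∧ w ≤ z) ∨ (w ≤ y ∧ P w z)) := by
  intro x y z hxy hxz
  rcases hforest x y z hxy hxz with h | h | h | h
  · exact ⟨x, hrefl x, Or.inr ⟨h, hxz⟩⟩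
  · exact ⟨x, hrefl x, Or.inl ⟨hxy, h⟩⟩
  · exact ⟨y, hxy, Or.inr ⟨le_refl y, h⟩⟩
  · exact ⟨z, hxz, Or.inl ⟨h, le_refl z⟩⟩
end

section
/- Let (W, ≤, P) be a P-frame with P reflexive and transitive satisfying (Pforest): xPy and xPz imply x ≤ y or x ≤ z or yPz or zPy. On the lattice of downsets define p(Y) = {x | ∃y ∈ Y, xPy} and X·Y = (p X ∩ Y) ∪ (X ∩ p Y). Then · is an associative operation on downsets. -/
theorem stmt_17 {W : Type*} [PartialOrder W]
    (P : W → W → Prop)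
    (hweak : ∀ u x y v : W, u ≤ x → P x y → y ≤ v → P u v)
    (hrefl : ∀ x : W, P x x)
    (htrans : ∀ x y z : W, P x y → P y z → P x z)
    (hforest : ∀ x y z : W, P x y → P x z → x ≤ y ∨ x ≤ z ∨ P y z ∨ P z y)
    (p : Set W → Set W)
    (hp : ∀ Y : Set W, p Y = {x | ∃ y ∈ Y, P x y})
    (mul : Set W → Set W → Set W)
    (hmul : ∀ X Y : Set W, mul X Y = (p X ∩ Y) ∪ (X ∩ p Y)) :
    ∀ X Y Z : Set W, IsLowerSet X → IsLowerSet Y → IsLowerSet Z →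
      mul (mul X Y) Z = mul X (mul Y Z) := by
  intro X Y Z hX hY hZ
  ext x
  simp only [hmul, hp, Set.mem_union, Set.mem_inter_iff, Set.mem_setOf_eq]
  constructor
  · rintro (⟨⟨y, (⟨⟨a, ha, hya⟩, hyY⟩ | ⟨hyX, ⟨b, hb, hyb⟩⟩), hxy⟩, hxZ⟩ |
      ⟨(⟨⟨a, ha, hxa⟩, hxY⟩ | ⟨hxX, ⟨b, hb, hxb⟩⟩), ⟨c, hc, hxc⟩⟩)
    · exact Or.inl ⟨⟨a, ha, htrans _ _ _ hxy hya⟩, Or.inl ⟨⟨y, hyY, hxy⟩, hxZ⟩⟩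
    · exact Or.inl ⟨⟨y, hyX, hxy⟩, Or.inl ⟨⟨b, hb, htrans _ _ _ hxy hyb⟩, hxZ⟩⟩
    · exact Or.inl ⟨⟨a, ha, hxa⟩, Or.inr ⟨hxY, c, hc, hxc⟩⟩
    · rcases hforest x b c hxb hxc with hle | hle | hbc | hcb
      · exact Or.inl ⟨⟨x, hxX, hrefl x⟩, Or.inr ⟨hY hle hb, c, hc, hxc⟩⟩
      · exact Or.inl ⟨⟨x, hxX, hrefl x⟩, Or.inl ⟨⟨b, hb, hxb⟩, hZ hle hc⟩⟩
      · exact Or.inr ⟨hxX, b, Or.inr ⟨hb, c, hc, hbc⟩, hxb⟩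
      · exact Or.inr ⟨hxX, c, Or.inl ⟨⟨b, hb, hcb⟩, hc⟩, hxc⟩
  · rintro (⟨⟨a, ha, hxa⟩, (⟨⟨b, hb, hxb⟩, hxZ⟩ | ⟨hxY, c, hc, hxc⟩)⟩ |
      ⟨hxX, y, (⟨⟨b, hb, hyb⟩, hyZ⟩ | ⟨hyY, ⟨c, hc, hyc⟩⟩), hxy⟩)
    · rcases hforest x a b hxa hxb with hle | hle | hab | hba
      · exact Or.inr ⟨Or.inr ⟨hX hle ha, b, hb, hxb⟩, x, hxZ, hrefl x⟩
      · exact Or.inr ⟨Or.inl ⟨⟨a, ha, hxa⟩, hY hle hb⟩, x, hxZ, hrefl x⟩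
      · exact Or.inl ⟨⟨a, Or.inr ⟨ha, b, hb, hab⟩, hxa⟩, hxZ⟩
      · exact Or.inl ⟨⟨b, Or.inl ⟨⟨a, ha, hba⟩, hb⟩, hxb⟩, hxZ⟩
    · exact Or.inr ⟨Or.inl ⟨⟨a, ha, hxa⟩, hxY⟩, c, hc, hxc⟩
    · exact Or.inr ⟨Or.inr ⟨hxX, b, hb, htrans _ _ _ hxy hyb⟩, y, hyZ, hxy⟩
    · exact Or.inr ⟨Or.inr ⟨hxX, y, hyY, hxy⟩, c, hc, htrans _ _ _ hxy hyc⟩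
end

section
/- Let (W, ≤, P) be a P-frame with p(Y) = {x | ∃y ∈ Y, xPy} on downsets and X·Y = (p X ∩ Y) ∪ (X ∩ p Y). For a downset E ⊆ W, E is a two-sided identity for · if and only if E = {x ∈ W | ∀y (xPy ⟹ x ≤ y)} and p(E) = W. -/
theorem stmt_18 {W : Type*} [PartialOrder W]
    (P : W → W → Prop)
    (hweak : ∀ u x y v : W, u ≤ x → P x y → y ≤ v → P u v)
    (p : Set W → Set W)
    (hp : ∀ Y : Set W, p Y = {x | ∃ y ∈ Y, P x y})
    (mul : Set W → Set W → Set W)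
    (hmul : ∀ X Y : Set W, mul X Y = (p X ∩ Y) ∪ (X ∩ p Y))
    (E : Set W) (hE : IsLowerSet E) :
    (∀ X : Set W, IsLowerSet X → mul E X = X ∧ mul X E = X) ↔
    (E = {x | ∀ y : W, P x y → x ≤ y} ∧ p E = Set.univ) := by
  have hlow : ∀ a : W, IsLowerSet {z : W | z ≤ a} := by
    intro a u v huv hv
    exact le_trans huv hv
  constructor
  · intro h
    have hpE : p E = Set.univ := by
      ext x
      simp only [Set.mem_univ, iff_true]
      have h1 := (h {z | z ≤ x} (hlow x)).1
      have hx : x ∈ mul E {z | z ≤ x} := by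
        rw [h1]; exact le_refl x
      rw [hmul] at hx
      rcases hx with ⟨hx, _⟩ | ⟨hxE, hx⟩
      · exact hx
      · rw [hp] at hx ⊢
        obtain ⟨y, hy, hPy⟩ := hx
        exact ⟨y, hE hy hxE, hPy⟩
    refine ⟨?_, hpE⟩
    ext x
    simp only [Set.mem_setOf_eq]
    constructor
    · intro hxE y hPy
      have h1 := (h {z | z ≤ y} (hlow y)).1
      have hx : x ∈ mul E {z | z ≤ y} := by
        rw [hmul]
        right
        refine ⟨hxE, ?_⟩
        rw [hp]
        exact ⟨y, le_refl y, hPy⟩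
      rw [h1] at hx
      exact hx
    · intro hx
      have h2 := (h {z | z ≤ x} (hlow x)).2
      have hxm : x ∈ mul {z | z ≤ x} E := by rw [h2]; exact le_refl x
      rw [hmul] at hxm
      rcases hxm with ⟨_, hxE⟩ | ⟨_, hxp⟩
      · exact hxE
      · rw [hp] at hxp
        obtain ⟨y, hyE, hPy⟩ := hxp
        exact hE (hx y hPy) hyE
  · rintro ⟨hEeq, hpE⟩ X hX
    have hEpX : E ∩ p X ⊆ X := by
      rintro x ⟨hxE, hxp⟩
      rw [hp] at hxp
      obtain ⟨y, hyX, hPy⟩ := hxp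
      rw [hEeq] at hxE
      exact hX (hxE y hPy) hyX
    constructor
    · rw [hmul, hpE]
      ext x
      constructor
      · rintro (⟨_, hx⟩ | hx)
        · exact hx
        · exact hEpX hx
      · intro hx; exact Or.inl ⟨Set.mem_univ x, hx⟩
    · rw [hmul, hpE]
      ext x
      constructor
      · rintro (hx | ⟨hx, _⟩)
        · exact hEpX ⟨hx.2, hx.1⟩
        · exact hx
      · intro hx; exact Or.inr ⟨hx, Set.mem_univ x⟩
end

section
/- Let (W,≤) be an arbitrary poset and P, Q binary relations on W satisfying (P0) x ≤ y ⟹ xPy, (Q0) x ≤ y ⟹ xQy, (P1) x ≤ y & xPz ⟹ x ≤ z ∨ yPz, (Q1) x ≤ y & xQz ⟹ x ≤ z ∨ yQz, (P2) xPy & y ≤ z ⟹ xPz, (Q2) xQy & y ≤ z ⟹ xQz. Define xRyz ⟺ (x ≤ y and x ≤ z) or (x ≤ y and yQz) or (x ≤ z and zPy). Then R satisfies the Birkhoff frame conditions: u ≤ x & xRyz ⟹ uRyz; xRyz & y ≤ v ⟹ xRvz; and xRyz & z ≤ w ⟹ xRyw. Moreover xPy ⟺ xRyx and xQy ⟺ xRxy.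 -/
theorem stmt_19 {W : Type*} [PartialOrder W]
    (P Q : W → W → Prop)
    (hP0 : ∀ x y : W, x ≤ y → P x y)
    (hQ0 : ∀ x y : W, x ≤ y → Q x y)
    (hP1 : ∀ x y z : W, x ≤ y → P x z → x ≤ z ∨ P y z)
    (hQ1 : ∀ x y z : W, x ≤ y → Q x z → x ≤ z ∨ Q y z)
    (hP2 : ∀ x y z : W, P x y → y ≤ z → P x z)
    (hQ2 : ∀ x y z : W, Q x y → y ≤ z → Q x z)
    (R : W → W → W → Prop)
    (hR : ∀ x y z : W, R x y z ↔
      (x ≤ y ∧ x ≤ z) ∨ (x ≤ y ∧ Q y z) ∨ (x ≤ z ∧ P z y)) :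
    (∀ u x y z : W, u ≤ x → R x y z → R u y z) ∧
    (∀ x y v z : W, R x y z → y ≤ v → R x v z) ∧
    (∀ x y z w : W, R x y z → z ≤ w → R x y w) ∧
    (∀ x y : W, P x y ↔ R x y x) ∧
    (∀ x y : W, Q x y ↔ R x x y) := by
  refine ⟨?_, ?_, ?_, ?_, ?_⟩
  · intro u x y z hux h
    rw [hR] at h ⊢
    rcases h with ⟨h1, h2⟩ | ⟨h1, h2⟩ | ⟨h1, h2⟩
    · exact Or.inl ⟨hux.trans h1, hux.trans h2⟩
    · exact Or.inr (Or.inl ⟨hux.trans h1, h2⟩)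
    · exact Or.inr (Or.inr ⟨hux.trans h1, h2⟩)
  · intro x y v z h hyv
    rw [hR] at h ⊢
    rcases h with ⟨h1, h2⟩ | ⟨h1, h2⟩ | ⟨h1, h2⟩
    · exact Or.inl ⟨h1.trans hyv, h2⟩
    · rcases hQ1 y v z hyv h2 with hyz | hvz
      · exact Or.inl ⟨h1.trans hyv, h1.trans hyz⟩
      · exact Or.inr (Or.inl ⟨h1.trans hyv, hvz⟩)
    · exact Or.inr (Or.inr ⟨h1, hP2 z y v h2 hyv⟩)
  · intro x y z w h hzw
    rw [hR] at h ⊢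
    rcases h with ⟨h1, h2⟩ | ⟨h1, h2⟩ | ⟨h1, h2⟩
    · exact Or.inl ⟨h1, h2.trans hzw⟩
    · exact Or.inr (Or.inl ⟨h1, hQ2 y z w h2 hzw⟩)
    · rcases hP1 z w y hzw h2 with hzy | hwy
      · exact Or.inl ⟨h1.trans hzy, h1.trans hzw⟩
      · exact Or.inr (Or.inr ⟨h1.trans hzw, hwy⟩)
  · intro x y
    rw [hR]
    constructor
    · intro h; exact Or.inr (Or.inr ⟨le_refl x, h⟩)
    · rintro (⟨h1, _⟩ | ⟨h1, _⟩ | ⟨_, h2⟩)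
      · exact hP0 x y h1
      · exact hP0 x y h1
      · exact h2
  · intro x y
    rw [hR]
    constructor
    · intro h; exact Or.inr (Or.inl ⟨le_refl x, h⟩)
    · rintro (⟨_, h2⟩ | ⟨_, h2⟩ | ⟨h1, _⟩)
      · exact hQ0 x y h2
      · exact h2
      · exact hQ0 x y h1
end
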